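/- Let b ≥ 0, 0 < m ≤ M, n > 2^b, and for 1 ≤ j ≤ 2^b set p_j = m^{(2^b+1−j)/(2^b+1)} · M^{j/(2^b+1)}. Let σ' be the price sequence of length n with σ'(k) = p_{k+1} for 0 ≤ k ≤ 2^b − 1, σ'(2^b) = M, and σ'(k) = m for 2^b < k ≤ n−1. If a deterministic online search strategy A accepts at some day k ≤ 2^b − 1 when run on σ' (i.e., the least index at which A returns true on the corresponding prefix is at most 2^b − 1), then profit(A, σ') ≤ p_{2^b}, and consequently max_k σ'(k) ≥ (M/m)^{1/(2^b+1)} · profit(A, σ'). -/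

import Mathlib

/-- The maximum price of a price sequence of positive length. -/
noncomputable def maxPrice {n : ℕ} (hn : 0 < n) (σ : Fin n → ℝ) : ℝ :=
  Finset.univ.sup' ⟨⟨0, hn⟩, Finset.mem_univ _⟩ σ

/-- The profit of a deterministic online search strategy `A : List ℝ → Bool`
on the price sequence `σ`: it accepts at the least index `k` such that `A`
applied to the prefix `[σ 0, …, σ k]` is `true`, obtaining `σ k`; if no such
index exists it must accept the last price `σ (n-1)`. -/
noncomputable def osProfit {n : ℕ} (hn : 0 < n) (A : List ℝ → Bool) (σ : Fin n → ℝ) : ℝ :=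
  if h : ∃ k : Fin n, A ((List.ofFn σ).take ((k : ℕ) + 1)) = true then
    σ ((Finset.univ.filter (fun k : Fin n => A ((List.ofFn σ).take ((k : ℕ) + 1)) = true)).min'
      (h.imp fun k hk => Finset.mem_filter.mpr ⟨Finset.mem_univ _, hk⟩))
  else σ ⟨n - 1, Nat.sub_lt hn one_pos⟩

/-! The prices `p_j = m * (M/m)^(j/(2^b+1))` increase with `j`, so a strategy that accepts
before day `2^b` earns at most `p_{2^b}`, while the sequence reaches `M`, which is exactly
`(M/m)^(1/(2^b+1))` times `p_{2^b}`. -/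

theorem rpow_sub_div_mul_rpow_div {m M c : ℝ} (hm : 0 < m) (hM : 0 < M) (hc : c ≠ 0) (t : ℝ) :
    m ^ ((c - t) / c) * M ^ (t / c) = m * (M / m) ^ (t / c) := by
  rw [sub_div, div_self hc, Real.rpow_sub hm, Real.rpow_one, Real.div_rpow hM.le hm.le]
  ring

theorem exists_le_osProfit_eq {n : ℕ} (hn : 0 < n) {A : List ℝ → Bool} {σ : Fin n → ℝ}
    {k : Fin n} (hk : A ((List.ofFn σ).take ((k : ℕ) + 1)) = true) :
    ∃ j ≤ k, osProfit hn A σ = σ j := by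
  have hmem : k ∈ Finset.univ.filter
      (fun k : Fin n => A ((List.ofFn σ).take ((k : ℕ) + 1)) = true) := by
    simpa using hk
  exact ⟨_, Finset.min'_le _ _ hmem, dif_pos ⟨k, hk⟩⟩

theorem le_maxPrice {n : ℕ} (hn : 0 < n) (σ : Fin n → ℝ) (k : Fin n) : σ k ≤ maxPrice hn σ :=
  Finset.le_sup' σ (Finset.mem_univ k)

/-- (Second case of the lower-bound proof.) With
`p_j = m^{(2^b+1-j)/(2^b+1)} M^{j/(2^b+1)}` and `σ'` the length-`n` sequence
`p_1, …, p_{2^b}, M, m, …, m`, if a deterministic strategy `A` accepts at some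
day `k ≤ 2^b - 1` when run on `σ'`, then its profit on `σ'` is at most
`p_{2^b}`, and consequently its competitive ratio on `σ'` is at least
`(M/m)^{1/(2^b+1)}`. -/
theorem lower_bound_case_all_accepted
    (b : ℕ) (m M : ℝ) (hm : 0 < m) (hmM : m ≤ M)
    (n : ℕ) (hn : 0 < n) (hbn : 2 ^ b < n)
    (p : ℕ → ℝ)
    (hp : ∀ j : ℕ, 1 ≤ j → j ≤ 2 ^ b →
      p j = m ^ ((2 ^ b + 1 - (j : ℝ)) / (2 ^ b + 1)) * M ^ ((j : ℝ) / (2 ^ b + 1)))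
    (σ : Fin n → ℝ)
    (hσ : ∀ k : Fin n, σ k =
      if (k : ℕ) < 2 ^ b then p ((k : ℕ) + 1) else if (k : ℕ) = 2 ^ b then M else m)
    (A : List ℝ → Bool)
    (hA : ∃ k : Fin n, (k : ℕ) ≤ 2 ^ b - 1 ∧ A ((List.ofFn σ).take ((k : ℕ) + 1)) = true) :
    osProfit hn A σ ≤ p (2 ^ b) ∧
      (M / m) ^ ((1 : ℝ) / (2 ^ b + 1)) * osProfit hn A σ ≤ maxPrice hn σ := by
  have hM : 0 < M := hm.trans_le hmM
  obtain ⟨k, hk, hAk⟩ := hA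
  obtain ⟨j, hjk, hprofit⟩ := exists_le_osProfit_eq hn hAk
  have hj : (j : ℕ) < 2 ^ b := by have := Nat.one_le_two_pow (n := b); omega
  have hp' : ∀ i : ℕ, 1 ≤ i → i ≤ 2 ^ b → p i = m * (M / m) ^ ((i : ℝ) / (2 ^ b + 1)) :=
    fun i hi₁ hi₂ => (hp i hi₁ hi₂).trans <|
      rpow_sub_div_mul_rpow_div hm hM (by positivity) _
  have hprofit_le : osProfit hn A σ ≤ p (2 ^ b) := by
    rw [hprofit, hσ, if_pos hj, hp' _ le_add_self hj, hp' _ Nat.one_le_two_pow le_rfl]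
    gcongr
    · exact (one_le_div hm).2 hmM
    · exact_mod_cast hj
  refine ⟨hprofit_le, ?_⟩
  calc (M / m) ^ ((1 : ℝ) / (2 ^ b + 1)) * osProfit hn A σ
      ≤ (M / m) ^ ((1 : ℝ) / (2 ^ b + 1)) * p (2 ^ b) := by gcongr
    _ = M := by
      rw [hp' _ Nat.one_le_two_pow le_rfl, mul_left_comm, ← Real.rpow_add (by positivity),
        ← add_div]
      push_cast
      rw [add_comm (1 : ℝ), div_self (by positivity), Real.rpow_one]
      field_simp
    _ = σ ⟨2 ^ b, hbn⟩ := by simp [hσ]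
    _ ≤ maxPrice hn σ := le_maxPrice hn σ _
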